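/- Given the parametrization J(h,λ) = N diag(Eλ) Yᵀ diag(h) with convex parameters (h,λ), h ∈ ℝⁿ₊, λ ∈ ℝˡ≥0, Eλ ∈ ℝʳ₊, the converse construction holds: setting x* = 1/h (componentwise) and κ = diag(ψ(h)) E λ yields κ ∈ ℝʳ₊, x* is a positive steady state of ẋ = N diag(κ)ψ(x), and the Jacobian of N diag(κ)ψ(x) at x* equals J(h,λ). -/

import Mathlib

open Matrix

/-!
The mass-action Jacobian has a closed form: the logarithmic derivative of a monomial is
`∂ₖ ψⱼ(x) = ψⱼ(x) Yₖⱼ / xₖ`, so the Jacobian of `x ↦ N diag(κ) ψ(x)` is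
`N diag(κ ψ(x)) Yᵀ diag(x⁻¹)`. At `x* = h⁻¹` the reaction rates are
`κⱼ ψⱼ(x*) = ψⱼ(h) (Eλ)ⱼ ψⱼ(h)⁻¹ = (Eλ)ⱼ`, hence `f(x*) = N E λ = 0` and the Jacobian is
`N diag(Eλ) Yᵀ diag(h)`.
-/

theorem natCast_mul_pow_sub_one {K : Type*} [Field K] {x : K} (hx : x ≠ 0) (y : ℕ) :
    (y : K) * x ^ (y - 1) = x ^ y * ((y : K) * x⁻¹) := by
  rcases Nat.eq_zero_or_pos y with rfl | hy
  · simp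
  · rw [pow_sub₀ x hx hy, pow_one]
    ring

theorem hasFDerivAt_prod_pow {𝕜 ι : Type*} [NontriviallyNormedField 𝕜] [Fintype ι]
    [DecidableEq ι] (y : ι → ℕ) {x : ι → 𝕜} (hx : ∀ i, x i ≠ 0) :
    HasFDerivAt (fun x : ι → 𝕜 => ∏ i, x i ^ y i)
      ((∏ i, x i ^ y i) •
        ∑ k, ((y k : 𝕜) * (x k)⁻¹) • (ContinuousLinearMap.proj k : (ι → 𝕜) →L[𝕜] 𝕜)) x := by
  have hfactor : ∀ k, HasFDerivAt (fun x : ι → 𝕜 => x k ^ y k)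
      (((y k : 𝕜) * x k ^ (y k - 1)) • (ContinuousLinearMap.proj k : (ι → 𝕜) →L[𝕜] 𝕜)) x :=
    fun k => (hasDerivAt_pow (y k) (x k)).comp_hasFDerivAt x (hasFDerivAt_apply k x)
  refine (HasFDerivAt.finsetProd fun k _ => hfactor k).congr_fderiv ?_
  rw [Finset.smul_sum]
  refine Finset.sum_congr rfl fun k _ => ?_
  rw [smul_smul, smul_smul, natCast_mul_pow_sub_one (hx k), ← mul_assoc,
    Finset.prod_erase_mul _ _ (Finset.mem_univ k)]

section MassAction

variable {ι ρ : Type*} [Fintype ι] [Fintype ρ]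

def massActionField (N : Matrix ι ρ ℝ) (Y : Matrix ι ρ ℕ) (κ : ρ → ℝ) (x : ι → ℝ) : ι → ℝ :=
  N *ᵥ fun j => κ j * ∏ i, x i ^ Y i j

theorem hasFDerivAt_massActionField [DecidableEq ι] [DecidableEq ρ] (N : Matrix ι ρ ℝ)
    (Y : Matrix ι ρ ℕ) (κ : ρ → ℝ) {x : ι → ℝ} (hx : ∀ i, x i ≠ 0) :
    HasFDerivAt (massActionField N Y κ)
      (Matrix.toLin' (N * diagonal (fun j => κ j * ∏ i, x i ^ Y i j) *
        (Y.map ((↑) : ℕ → ℝ))ᵀ * diagonal x⁻¹)).toContinuousLinearMap x := by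
  have hrates := hasFDerivAt_pi.2 fun j =>
    (hasFDerivAt_prod_pow (fun i => Y i j) hx).const_mul (κ j)
  refine ((Matrix.toLin' N).toContinuousLinearMap.hasFDerivAt.comp x hrates).congr_fderiv ?_
  ext u : 1
  have hdiag : diagonal x⁻¹ *ᵥ u = fun k => (x k)⁻¹ * u k := funext (mulVec_diagonal _ _)
  simp only [ContinuousLinearMap.comp_apply, ContinuousLinearMap.coe_pi', _root_.smul_apply,
    _root_.sum_apply, ContinuousLinearMap.proj_apply, smul_eq_mul,
    LinearMap.coe_toContinuousLinearMap', toLin'_apply, ← mulVec_mulVec, hdiag]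
  congr 1
  ext j
  rw [mulVec_diagonal]
  simp only [mulVec, dotProduct, transpose_apply, map_apply, Finset.mul_sum]
  exact Finset.sum_congr rfl fun k _ => by ring

end MassAction

theorem convex_parameters_realize_jacobian_general
    (n r l : ℕ)
    (N : Matrix (Fin n) (Fin r) ℝ)
    (Y : Matrix (Fin n) (Fin r) ℕ)
    (E : Matrix (Fin r) (Fin l) ℝ)
    (hNE : N * E = 0)
    (h : Fin n → ℝ) (hh : ∀ i, 0 < h i)
    (lam : Fin l → ℝ)
    (hpos : ∀ j, 0 < E.mulVec lam j)
    (xstar : Fin n → ℝ) (hx : xstar = fun i => (h i)⁻¹)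
    (κ : Fin r → ℝ) (hκ : κ = fun j => (∏ i, h i ^ Y i j) * E.mulVec lam j)
    (f : (Fin n → ℝ) → (Fin n → ℝ))
    (hf : f = fun x => N.mulVec (fun j => κ j * ∏ i, x i ^ Y i j)) :
    (∀ j, 0 < κ j) ∧ (∀ i, 0 < xstar i) ∧ f xstar = 0 ∧
      ∀ u : Fin n → ℝ,
        fderiv ℝ f xstar u =
          (N * Matrix.diagonal (E.mulVec lam) * (Y.map (fun m => (m : ℝ)))ᵀ *
            Matrix.diagonal h).mulVec u := by
  have hf : f = massActionField N Y κ := hf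
  have hψ : ∀ j, 0 < ∏ i, h i ^ Y i j := fun j => Finset.prod_pos fun i _ => pow_pos (hh i) _
  have hxstar : ∀ i, 0 < xstar i := fun i => hx ▸ inv_pos.2 (hh i)
  have hinv : xstar⁻¹ = h := by rw [hx]; exact inv_inv h
  have hrates : (fun j => κ j * ∏ i, xstar i ^ Y i j) = E *ᵥ lam := by
    funext j
    rw [hκ, hx]
    simp only [inv_pow, Finset.prod_inv_distrib]
    field_simp [(hψ j).ne']
  refine ⟨fun j => hκ ▸ mul_pos (hψ j) (hpos j), hxstar, ?_, fun u => ?_⟩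
  · rw [hf, massActionField, hrates, mulVec_mulVec, hNE, zero_mulVec]
  · rw [hf, (hasFDerivAt_massActionField N Y κ fun i => (hxstar i).ne').fderiv, hrates, hinv]
    rfl

/-- Converse construction: given convex parameters `(h, λ)` with `h > 0`, `λ ≥ 0`,
`Eλ > 0`, and `E` with columns in the kernel of `N`, setting `x* = 1/h` and
`κ = diag(ψ(h)) E λ` yields positive rate constants, a positive steady state `x*` of
`ẋ = N diag(κ) ψ(x)`, and Jacobian `N diag(Eλ) Yᵀ diag(h)` at `x*`. -/
theorem convex_parameters_realize_jacobian
    (n r l : ℕ)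
    (N : Matrix (Fin n) (Fin r) ℝ)
    (Y : Matrix (Fin n) (Fin r) ℕ)
    (E : Matrix (Fin r) (Fin l) ℝ)
    (hNE : N * E = 0)
    (h : Fin n → ℝ) (hh : ∀ i, 0 < h i)
    (lam : Fin l → ℝ) (hlam : ∀ i, 0 ≤ lam i)
    (hpos : ∀ j, 0 < E.mulVec lam j)
    (xstar : Fin n → ℝ) (hx : xstar = fun i => (h i)⁻¹)
    (κ : Fin r → ℝ) (hκ : κ = fun j => (∏ i, h i ^ Y i j) * E.mulVec lam j)
    (f : (Fin n → ℝ) → (Fin n → ℝ))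
    (hf : f = fun x => N.mulVec (fun j => κ j * ∏ i, x i ^ Y i j)) :
    (∀ j, 0 < κ j) ∧ (∀ i, 0 < xstar i) ∧ f xstar = 0 ∧
      ∀ u : Fin n → ℝ,
        fderiv ℝ f xstar u =
          (N * Matrix.diagonal (E.mulVec lam) * (Y.map (fun m => (m : ℝ)))ᵀ *
            Matrix.diagonal h).mulVec u :=
  convex_parameters_realize_jacobian_general n r l N Y E hNE h hh lam hpos xstar hx κ hκ f hf
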